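/- For all integers α ≥ 0 and n ≥ 0, both a_{2,4}(3^{2α+3} n + 3^{2(α+1)}) ≡ 0 (mod 3) and a_{2,4}(3^{2α+3} n + 2·3^{2(α+1)}) ≡ 0 (mod 3). -/

import Mathlib

/-- `colorPart r s n` is the number `a_{r,s}(n)` of partitions of `n` in which even parts
may appear in any of `r` colors and odd parts in any of `s` colors, realized as the
coefficient of `q^n` in `∏_{m ≥ 1} (1 - q^{2m-1})^{-s} (1 - q^{2m})^{-r}` over `ℤ`.  Since
the factors with `2m - 1 > n` do not affect the coefficient of `q^n`, this coefficient
equals the coefficient of `q^n` in the finite product of the factors for `1 ≤ m ≤ n + 1`. -/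
noncomputable def colorPart (r s n : ℕ) : ℤ :=
  PowerSeries.coeff (R := ℤ) n
    (∏ m ∈ Finset.range (n + 1),
      (PowerSeries.invOfUnit (1 - PowerSeries.X ^ (2 * m + 1)) 1) ^ s *
      (PowerSeries.invOfUnit (1 - PowerSeries.X ^ (2 * m + 2)) 1) ^ r)

/-!
By Gauss's identity `φ(-q) = ∑_{j ∈ ℤ} (-1)^j q^{j²} = (q;q²)_∞² (q²;q²)_∞`, the generating
function of `a_{2,4}` is `F = φ(-q)⁻²`. Modulo 3 we have `φ(-q)³ = φ(-q³)`, and since a square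
divisible by 3 is divisible by 9, the 3-section `U₃ φ(-q)` (the series `∑ c(3n) qⁿ`) is
`φ(-q³)` as well. Applying `U₃` to `F φ(-q)³ = φ(-q)` therefore gives
`T := U₃ F ≡ φ(-q)²`. As squares are `0` or `1` modulo 3, a representation
`3n = i² + j²` forces `3 ∣ i, j`, so `U₃ T ≡ T(q³)`; iterating,
`a_{2,4}(3^{2α+2} m) = [q^{3^{2α+1} m}] T ≡ [q^{3m}] T ≡ 0` whenever `3 ∤ m`.

Gauss's identity is used in the finite form
`(q;q²)_N² = ∑_{|j| ≤ N} (-1)^j q^{j²} [2N choose N+j]_{q²}` (the `q`-binomial theorem), together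
with `[2N choose N+j]_{q²} (q²;q²)_N ≡ 1` modulo `q^{2(N-|j|)+2}`.
-/

open PowerSeries Finset

section Congruence

variable {A : Type*} [CommRing A]

lemma SModEq.of_pow_le {q a b : A} {d e : ℕ} (h : a ≡ b [SMOD Ideal.span {q ^ d}]) (he : e ≤ d) :
    a ≡ b [SMOD Ideal.span {q ^ e}] :=
  h.mono (Ideal.span_singleton_le_span_singleton.mpr (pow_dvd_pow q he))

lemma SModEq.pow_mul_shift {q a b : A} {d : ℕ} (h : a ≡ b [SMOD Ideal.span {q ^ d}]) (e : ℕ) :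
    q ^ e * a ≡ q ^ e * b [SMOD Ideal.span {q ^ (e + d)}] := by
  rw [SModEq.sub_mem, Ideal.mem_span_singleton, ← mul_sub, pow_add] at *
  exact mul_dvd_mul_left _ h

lemma pow_mul_smodEq_zero {q : A} {d k : ℕ} (h : d ≤ k) (a : A) :
    q ^ k * a ≡ 0 [SMOD Ideal.span {q ^ d}] :=
  SModEq.zero.mpr (Ideal.mem_span_singleton.mpr (Dvd.dvd.mul_right (pow_dvd_pow q h) a))

lemma one_sub_pow_smodEq_one {q : A} {d k : ℕ} (h : d ≤ k) :
    1 - q ^ k ≡ 1 [SMOD Ideal.span {q ^ d}] := by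
  simpa using (SModEq.refl (U := Ideal.span {q ^ d}) 1).sub (pow_mul_smodEq_zero h 1)

lemma SModEq.cancel_of_isUnit {I : Ideal A} {a b u : A} (hu : IsUnit u)
    (h : a * u ≡ b * u [SMOD I]) : a ≡ b [SMOD I] := by
  obtain ⟨v, hv⟩ := hu.exists_right_inv
  simpa [mul_assoc, hv] using h.mul (SModEq.refl (U := I) v)

end Congruence

namespace PowerSeries

variable {R : Type*} [CommRing R]

noncomputable def contract (p : ℕ) (f : R⟦X⟧) : R⟦X⟧ := mk fun n ↦ coeff (p * n) f

@[simp] lemma coeff_contract (p n : ℕ) (f : R⟦X⟧) : coeff n (contract p f) = coeff (p * n) f :=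
  coeff_mk _ _

lemma coeff_mul_mul_eq_sum_antidiagonal {p : ℕ} (hp : p ≠ 0) {f g : R⟦X⟧} {n : ℕ}
    (hfg : ∀ i j, i + j = p * n → ¬ p ∣ i → coeff i f * coeff j g = 0) :
    coeff (p * n) (f * g) = ∑ x ∈ antidiagonal n, coeff (p * x.1) f * coeff (p * x.2) g := by
  rw [coeff_mul, ← sum_subset (s₁ := (antidiagonal n).image fun x ↦ (p * x.1, p * x.2)),
    sum_image]
  · intro x _ y _ h
    simpa [Prod.ext_iff, Nat.mul_left_cancel_iff (Nat.pos_of_ne_zero hp)] using h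
  · simp_rw [subset_iff, mem_image, HasAntidiagonal.mem_antidiagonal]
    rintro _ ⟨x, rfl, rfl⟩
    rw [← mul_add]
  · simp_rw [mem_image, HasAntidiagonal.mem_antidiagonal]
    rintro ⟨i, j⟩ (hij : i + j = p * n) hnot
    refine hfg i j hij fun ⟨a, ha⟩ ↦ hnot ⟨(a, n - a), ?_⟩
    have han : a ≤ n := Nat.le_of_mul_le_mul_left (by omega) (Nat.pos_of_ne_zero hp)
    have hj : j = p * (n - a) := by rw [Nat.mul_sub, ← ha]; omega
    simp [ha, hj, han]

lemma contract_mul_expand {p : ℕ} (hp : p ≠ 0) (f g : R⟦X⟧) :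
    contract p (f * expand p hp g) = contract p f * g := by
  ext n
  rw [coeff_contract, coeff_mul_mul_eq_sum_antidiagonal hp, coeff_mul]
  · simp
  · intro i j hij hi
    rw [coeff_expand_of_not_dvd p hp _ fun hj ↦ hi ?_, mul_zero]
    exact (Nat.dvd_add_left hj).mp (hij ▸ dvd_mul_right p n)

lemma contract_mul {p : ℕ} (hp : p ≠ 0) {f g : R⟦X⟧}
    (hfg : ∀ i j, p ∣ i + j → coeff i f ≠ 0 → coeff j g ≠ 0 → p ∣ i) :
    contract p (f * g) = contract p f * contract p g := by
  ext n
  rw [coeff_contract, coeff_mul_mul_eq_sum_antidiagonal hp, coeff_mul]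
  · simp
  · intro i j hij hi
    by_contra h
    exact hi (hfg i j (hij ▸ dvd_mul_right p n) (left_ne_zero_of_mul h) (right_ne_zero_of_mul h))

lemma pow_eq_expand_zmod {p : ℕ} [Fact p.Prime] (f : (ZMod p)⟦X⟧) :
    f ^ p = expand p (NeZero.ne p) f := by
  rw [← MvPowerSeries.map_frobenius_expand p (NeZero.ne p), ZMod.frobenius_zmod,
    MvPowerSeries.map_id]
  rfl

lemma smodEq_X_pow_iff {d : ℕ} {f g : R⟦X⟧} :
    f ≡ g [SMOD Ideal.span {X ^ d}] ↔ ∀ i < d, coeff i f = coeff i g := by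
  simp_rw [SModEq.sub_mem, Ideal.mem_span_singleton, X_pow_dvd_iff, map_sub, sub_eq_zero]

lemma eq_of_forall_smodEq_X_pow {f g : R⟦X⟧} (h : ∀ d, f ≡ g [SMOD Ideal.span {X ^ d}]) :
    f = g :=
  ext fun n ↦ smodEq_X_pow_iff.mp (h (n + 1)) n n.lt_succ_self

lemma invOfUnit_one_sub_X_pow_smodEq_one {k : ℕ} (hk : k ≠ 0) :
    invOfUnit (1 - X ^ k : R⟦X⟧) 1 ≡ 1 [SMOD Ideal.span {X ^ k}] := by
  have h : (1 - X ^ k : R⟦X⟧) * invOfUnit (1 - X ^ k) 1 = 1 := mul_invOfUnit _ _ (by simp [hk])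
  rw [show invOfUnit (1 - X ^ k : R⟦X⟧) 1 = 1 + X ^ k * invOfUnit (1 - X ^ k) 1 by
    linear_combination h]
  simpa using (SModEq.refl 1).add (pow_mul_smodEq_zero le_rfl (invOfUnit (1 - X ^ k : R⟦X⟧) 1))

end PowerSeries

section QBinomial

variable {A : Type*} [CommRing A] (q : A)

def qPochhammer (n : ℕ) : A := ∏ j ∈ range n, (1 - q ^ (j + 1))

/-- The Gaussian binomial coefficient `[k + l choose k]_q`. -/
def qBinom : ℕ → ℕ → A
  | 0, _ => 1
  | _ + 1, 0 => 1
  | k + 1, l + 1 => qBinom k (l + 1) + q ^ (k + 1) * qBinom (k + 1) l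

@[simp] lemma qBinom_zero_left (l : ℕ) : qBinom q 0 l = 1 := by rw [qBinom]

@[simp] lemma qBinom_zero_right (k : ℕ) : qBinom q k 0 = 1 := by cases k <;> rw [qBinom]

lemma qBinom_succ_succ (k l : ℕ) :
    qBinom q (k + 1) (l + 1) = qBinom q k (l + 1) + q ^ (k + 1) * qBinom q (k + 1) l := by
  rw [qBinom]

lemma qPochhammer_succ (n : ℕ) : qPochhammer q (n + 1) = qPochhammer q n * (1 - q ^ (n + 1)) :=
  prod_range_succ _ _

lemma qBinom_mul_qPochhammer_mul_qPochhammer (k l : ℕ) :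
    qBinom q k l * qPochhammer q k * qPochhammer q l = qPochhammer q (k + l) := by
  induction k generalizing l with
  | zero => simp [qPochhammer]
  | succ k ih =>
    induction l with
    | zero => simp [qPochhammer]
    | succ l ihl =>
      have h1 := ih (l + 1)
      rw [qPochhammer_succ q l, show k + (l + 1) = k + l + 1 by ring] at h1
      rw [qPochhammer_succ q k, show k + 1 + l = k + l + 1 by ring] at ihl
      rw [qBinom_succ_succ, qPochhammer_succ q k, qPochhammer_succ q l,
        show k + 1 + (l + 1) = k + l + 1 + 1 by ring, qPochhammer_succ q (k + l + 1)]
      linear_combination (1 - q ^ (k + 1)) * h1 + q ^ (k + 1) * (1 - q ^ (l + 1)) * ihl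

theorem prod_add_mul_pow_eq_sum_qBinom (m : ℕ) (y z : A) :
    ∏ j ∈ range m, (y + z * q ^ j) =
      ∑ p ∈ antidiagonal m, q ^ p.1.choose 2 * qBinom q p.1 p.2 * z ^ p.1 * y ^ p.2 := by
  induction m generalizing z with
  | zero => simp
  | succ m ih =>
    set f : A → ℕ → ℕ → A := fun z k l ↦ q ^ k.choose 2 * qBinom q k l * z ^ k * y ^ l
    -- Peeling off the factor `y + z` leaves the product for `z * q`; the recursion of `qBinom`
    -- matches the terms `f z k l` of the expansion with those of `f (z * q)`.
    have hleft (l : ℕ) : f z 0 (l + 1) = y * f (z * q) 0 l := by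
      simp only [f, Nat.choose_zero_succ, qBinom_zero_left, pow_zero, pow_succ]; ring
    have hright (k : ℕ) : f z (k + 1) 0 = z * f (z * q) k 0 := by
      simp only [f, Nat.choose_succ_succ', Nat.choose_one_right, qBinom_zero_right]; ring
    have hmid (k l : ℕ) :
        f z (k + 1) (l + 1) = z * f (z * q) k (l + 1) + y * f (z * q) (k + 1) l := by
      simp only [f, Nat.choose_succ_succ', Nat.choose_one_right, qBinom_succ_succ]; ring
    have hsplit : ∀ k ∈ range m, f z (k + 1) (m - k) =
        z * f (z * q) k (m - k) + y * f (z * q) (k + 1) (m - (k + 1)) := by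
      intro k hk
      rw [show m - k = m - (k + 1) + 1 by have := mem_range.mp hk; omega, hmid]
    simp_rw [prod_range_succ', pow_succ', ← mul_assoc, ih (z * q),
      Nat.sum_antidiagonal_eq_sum_range_succ_mk]
    show (∑ k ∈ range (m + 1), f (z * q) k (m - k)) * (y + z * q ^ 0) =
      ∑ k ∈ range (m + 2), f z k (m + 1 - k)
    have e1 := sum_range_succ (fun k ↦ f (z * q) k (m - k)) m
    have e2 := sum_range_succ' (fun k ↦ f (z * q) k (m - k)) m
    have e3 : ∑ k ∈ range (m + 2), f z k (m + 1 - k) =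
        f z 0 (m + 1) + ∑ k ∈ range m, f z (k + 1) (m - k) + f z (m + 1) 0 := by
      rw [sum_range_succ', sum_range_succ]
      simp only [Nat.add_sub_add_right, Nat.sub_zero, Nat.sub_self]
      ring
    rw [e3, sum_congr rfl hsplit, sum_add_distrib, ← mul_sum, ← mul_sum, hleft, hright]
    simp only [Nat.sub_zero, Nat.sub_self] at e1 e2
    linear_combination z * e1 + y * e2

lemma qPochhammer_smodEq {k m : ℕ} (h : k ≤ m) :
    qPochhammer q m ≡ qPochhammer q k [SMOD Ideal.span {q ^ (k + 1)}] := by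
  obtain ⟨u, rfl⟩ := Nat.exists_eq_add_of_le h
  rw [qPochhammer, prod_range_add, ← qPochhammer]
  simpa using (SModEq.refl (qPochhammer q k)).mul
    (SModEq.prod fun j _ ↦ one_sub_pow_smodEq_one (by omega) : ∏ j ∈ range u,
      (1 - q ^ (k + j + 1)) ≡ ∏ j ∈ range u, 1 [SMOD Ideal.span {q ^ (k + 1)}])

end QBinomial

lemma isUnit_qPochhammer {R : Type*} [CommRing R] {q : R⟦X⟧} (hq : constantCoeff q = 0) (n : ℕ) :
    IsUnit (qPochhammer q n) := by
  rw [isUnit_iff_constantCoeff, qPochhammer, map_prod]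
  simp [hq]

lemma qBinom_mul_qPochhammer_smodEq_one {R : Type*} [CommRing R] {q : R⟦X⟧}
    (hq : constantCoeff q = 0) {k l M : ℕ} (hM : min k l ≤ M) :
    qBinom q k l * qPochhammer q M ≡ 1 [SMOD Ideal.span {q ^ (min k l + 1)}] := by
  set a := min k l
  have hP {m : ℕ} (h : a ≤ m) := qPochhammer_smodEq q h
  refine SModEq.cancel_of_isUnit ((isUnit_qPochhammer hq k).mul (isUnit_qPochhammer hq l)) ?_
  calc qBinom q k l * qPochhammer q M * (qPochhammer q k * qPochhammer q l)
      = qPochhammer q (k + l) * qPochhammer q M := by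
        rw [← qBinom_mul_qPochhammer_mul_qPochhammer]; ring
    _ ≡ qPochhammer q a * qPochhammer q a [SMOD Ideal.span {q ^ (a + 1)}] :=
        (hP (by omega)).mul (hP hM)
    _ ≡ 1 * (qPochhammer q k * qPochhammer q l) [SMOD Ideal.span {q ^ (a + 1)}] := by
        rw [one_mul]; exact ((hP (min_le_left k l)).mul (hP (min_le_right k l))).symm

lemma sum_antidiagonal_two_mul_eq_sum_Icc {M : Type*} [AddCommMonoid M] (f : ℤ → M) (N : ℕ) :
    ∑ p ∈ antidiagonal (2 * N), f (p.1 - N) = ∑ j ∈ Icc (-(N : ℤ)) N, f j := by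
  rw [Nat.sum_antidiagonal_eq_sum_range_succ_mk]
  dsimp only
  apply sum_nbij' (fun k : ℕ ↦ (k : ℤ) - N) (fun j : ℤ ↦ (j + N).toNat) <;> intros <;> simp_all <;>
    omega

section Theta

variable (R : Type*) [CommRing R]

/-- `(q;q²)_N`. -/
noncomputable def oddProd (N : ℕ) : R⟦X⟧ := ∏ j ∈ range N, (1 - X ^ (2 * j + 1))

lemma two_mul_choose_two (k : ℕ) : 2 * k.choose 2 = k * (k - 1) := by
  rw [mul_comm, Nat.choose_two_right, Nat.div_two_mul_two_of_even (Nat.even_mul_pred_self k)]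

lemma gauss_exponent {k l N : ℕ} (h : k + l = 2 * N) :
    2 * k.choose 2 + (2 * N - 1) * l =
      N * (N - 1) + (2 * N - 1) * N + ((k : ℤ) - N).natAbs ^ 2 := by
  rw [two_mul_choose_two]
  rcases N with _ | N
  · obtain ⟨rfl, rfl⟩ : k = 0 ∧ l = 0 := by omega
    simp
  rcases k with _ | k
  · obtain rfl : l = 2 * (N + 1) := by omega
    zify
    simp only [sq_abs]
    push_cast [Nat.cast_sub (show 1 ≤ 2 * (N + 1) by omega)]
    ring
  · zify [show 1 ≤ 2 * (N + 1) by omega]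
    simp only [sq_abs]
    have hl : (l : ℤ) = 2 * (N + 1) - (k + 1) := by omega
    rw [hl]
    push_cast
    ring

lemma prod_X_pow_add_neg_X_sq_pow (N : ℕ) :
    ∏ j ∈ range (2 * N), (X ^ (2 * N - 1) + (-1) * (X ^ 2) ^ j) =
      (-1) ^ N * X ^ (N * (N - 1) + (2 * N - 1) * N) * oddProd R N ^ 2 := by
  have hlow : ∏ j ∈ range N, (X ^ (2 * N - 1) + (-1) * (X ^ 2) ^ j) =
      (-1) ^ N * X ^ (N * (N - 1)) * oddProd R N := by
    rw [prod_congr rfl fun j hj ↦ show (X : R⟦X⟧) ^ (2 * N - 1) + (-1) * (X ^ 2) ^ j =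
        -1 * X ^ (2 * j) * (1 - X ^ (2 * (N - 1 - j) + 1)) by
      rw [← pow_mul, show 2 * N - 1 = 2 * j + (2 * (N - 1 - j) + 1) by
        have := mem_range.mp hj; omega, pow_add]; ring]
    rw [prod_mul_distrib, prod_mul_distrib, prod_const, card_range, prod_pow_eq_pow_sum,
      ← mul_sum, mul_comm 2, sum_range_id_mul_two, oddProd, ← prod_range_reflect]
    refine congrArg _ (prod_congr rfl fun j hj ↦ ?_)
    rw [show N - 1 - (N - 1 - j) = j by have := mem_range.mp hj; omega]
  have hhigh : ∏ j ∈ range N, (X ^ (2 * N - 1) + (-1) * (X ^ 2) ^ (N + j)) =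
      X ^ ((2 * N - 1) * N) * oddProd R N := by
    rw [prod_congr rfl fun j hj ↦ show (X : R⟦X⟧) ^ (2 * N - 1) + (-1) * (X ^ 2) ^ (N + j) =
        X ^ (2 * N - 1) * (1 - X ^ (2 * j + 1)) by
      rw [← pow_mul, show 2 * (N + j) = 2 * N - 1 + (2 * j + 1) by
        have := mem_range.mp hj; omega, pow_add]; ring]
    rw [prod_mul_distrib, prod_const, card_range, ← pow_mul, oddProd]
  rw [show range (2 * N) = range (N + N) by rw [two_mul], prod_range_add, hlow, hhigh, pow_add]
  ring

lemma oddProd_sq (N : ℕ) :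
    oddProd R N ^ 2 = ∑ p ∈ antidiagonal (2 * N),
      (-1) ^ (p.1 + N) * X ^ ((p.1 - N : ℤ).natAbs ^ 2) * qBinom (X ^ 2) p.1 p.2 := by
  set E := N * (N - 1) + (2 * N - 1) * N
  have hsum : (X : R⟦X⟧) ^ E * ∑ p ∈ antidiagonal (2 * N),
      (-1) ^ (p.1 + N) * X ^ ((p.1 - N : ℤ).natAbs ^ 2) * qBinom (X ^ 2) p.1 p.2 =
      (-1) ^ N * ∑ p ∈ antidiagonal (2 * N),
        (X ^ 2) ^ p.1.choose 2 * qBinom (X ^ 2) p.1 p.2 * (-1) ^ p.1 * (X ^ (2 * N - 1)) ^ p.2 := by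
    rw [mul_sum, mul_sum]
    refine sum_congr rfl fun p hp ↦ ?_
    have h := congrArg ((X : R⟦X⟧) ^ ·) (gauss_exponent (mem_antidiagonal.mp hp))
    simp only [pow_add, pow_mul] at h
    linear_combination (-(-1 : R⟦X⟧) ^ p.1 * (-1) ^ N * qBinom (X ^ 2 : R⟦X⟧) p.1 p.2) * h
  have hsign : ((-1 : R⟦X⟧) ^ N) ^ 2 = 1 := by rw [← pow_mul, Even.neg_one_pow ⟨N, by ring⟩]
  -- the `q`-binomial theorem at `q = X²`, `y = X^{2N-1}`, `z = -1`, cancelled by `X^E`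
  refine X_pow_mul_cancel (k := E) ?_
  rw [hsum, ← prod_add_mul_pow_eq_sum_qBinom, prod_X_pow_add_neg_X_sq_pow]
  linear_combination (- X ^ E * oddProd R N ^ 2) * hsign

noncomputable def thetaCoeff (n : ℕ) : ℤ :=
  ∑ j ∈ Icc (-(n : ℤ)) n with j ^ 2 = (n : ℤ), (-1) ^ j.natAbs

/-- Ramanujan's `φ(-q)`. -/
noncomputable def theta : R⟦X⟧ := mk fun n ↦ (thetaCoeff n : R)

lemma sum_Icc_C_mul_X_pow_smodEq_theta (N : ℕ) :
    ∑ j ∈ Icc (-(N : ℤ)) N, C ((-1 : R) ^ j.natAbs) * X ^ (j.natAbs ^ 2) ≡ theta R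
      [SMOD Ideal.span {X ^ (N + 1)}] := by
  refine smodEq_X_pow_iff.mpr fun i hi ↦ ?_
  simp only [map_sum, coeff_C_mul_X_pow, theta, coeff_mk, thetaCoeff, Int.cast_sum]
  rw [← sum_filter]
  push_cast
  refine sum_congr (Finset.ext fun j ↦ ?_) fun _ _ ↦ rfl
  have hsq : i = j.natAbs ^ 2 ↔ j ^ 2 = i := by
    rw [← Int.natAbs_sq j, eq_comm]; norm_cast
  have hle : j.natAbs ≤ j.natAbs ^ 2 := Nat.le_self_pow two_ne_zero _
  simp only [mem_filter, mem_Icc, ← hsq]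
  generalize j.natAbs ^ 2 = s at hle
  omega

lemma theta_smodEq (N : ℕ) :
    oddProd R N ^ 2 * qPochhammer (X ^ 2) N ≡ theta R [SMOD Ideal.span {X ^ (N + 1)}] := by
  have hq : constantCoeff (X ^ 2 : R⟦X⟧) = 0 := by simp
  calc oddProd R N ^ 2 * qPochhammer (X ^ 2) N
      ≡ ∑ p ∈ antidiagonal (2 * N), (-1) ^ (p.1 + N) * X ^ ((p.1 - N : ℤ).natAbs ^ 2)
        [SMOD Ideal.span {X ^ (N + 1)}] := by
        rw [oddProd_sq, sum_mul]
        refine SModEq.sum fun p hp ↦ ?_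
        have hp := mem_antidiagonal.mp hp
        set d := (p.1 - N : ℤ).natAbs
        have h := qBinom_mul_qPochhammer_smodEq_one hq (show min p.1 p.2 ≤ N by omega)
        rw [← pow_mul] at h
        replace h := h.pow_mul_shift (d ^ 2)
        rw [mul_one] at h
        have hd : N + 1 ≤ d ^ 2 + 2 * (min p.1 p.2 + 1) := by
          have : min p.1 p.2 + d = N := by omega
          nlinarith
        simpa [mul_assoc] using (SModEq.refl ((-1) ^ (p.1 + N))).mul (h.of_pow_le hd)
    _ = ∑ j ∈ Icc (-(N : ℤ)) N, C ((-1 : R) ^ j.natAbs) * X ^ (j.natAbs ^ 2) := by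
        rw [← sum_antidiagonal_two_mul_eq_sum_Icc]
        refine sum_congr rfl fun p hp ↦ ?_
        have hp := mem_antidiagonal.mp hp
        rw [show p.1 + N = (p.1 - N : ℤ).natAbs + 2 * min p.1 N by omega, pow_add, pow_mul]
        simp
    _ ≡ theta R [SMOD Ideal.span {X ^ (N + 1)}] := by exact sum_Icc_C_mul_X_pow_smodEq_theta R N

lemma exists_eq_three_mul_of_sq_eq {j : ℤ} {n : ℕ} (h : j ^ 2 = 3 * n) : ∃ a, j = 3 * a :=
  Int.prime_three.dvd_of_dvd_pow (n := 2) ⟨n, h⟩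

lemma thetaCoeff_eq_zero_of_mod_three {n : ℕ} (hn : n % 3 = 2) : thetaCoeff n = 0 := by
  refine sum_eq_zero fun j hj ↦ absurd (mem_filter.mp hj).2 fun h ↦ ?_
  have hsq : ∀ x : ZMod 3, x ^ 2 ≠ 2 := by decide
  apply hsq j
  have := congrArg (Int.cast : ℤ → ZMod 3) h
  push_cast at this
  rw [this, ← ZMod.natCast_mod, hn]
  rfl

lemma thetaCoeff_nine_mul (m : ℕ) : thetaCoeff (9 * m) = thetaCoeff m := by
  symm
  apply sum_nbij (3 * ·)
  · intro j hj
    simp only [mem_filter, mem_Icc] at hj ⊢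
    push_cast at hj ⊢
    refine ⟨⟨by omega, by omega⟩, by rw [mul_pow, hj.2]; ring⟩
  · intro a _ b _ h
    simp only at h
    omega
  · intro j hj
    simp only [coe_filter, mem_Icc, Set.mem_image] at hj ⊢
    push_cast at hj
    obtain ⟨a, rfl⟩ := exists_eq_three_mul_of_sq_eq (n := 3 * m) (by rw [hj.2]; push_cast; ring)
    have ha : a ^ 2 = m :=
      mul_left_cancel₀ (show (9 : ℤ) ≠ 0 by norm_num) (by linear_combination hj.2)
    refine ⟨a, ⟨⟨?_, ?_⟩, ha⟩, rfl⟩ <;> nlinarith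
  · intro j _
    simp [Int.natAbs_mul, pow_mul]

lemma thetaCoeff_three_mul_of_not_dvd {n : ℕ} (hn : ¬ 3 ∣ n) : thetaCoeff (3 * n) = 0 := by
  refine sum_eq_zero fun j hj ↦ absurd (mem_filter.mp hj).2 fun h ↦ hn ?_
  push_cast at h
  obtain ⟨a, rfl⟩ := exists_eq_three_mul_of_sq_eq h
  have : (n : ℤ) = 3 * a ^ 2 := mul_left_cancel₀ three_ne_zero (by linear_combination -h)
  exact Int.natCast_dvd_natCast.mp ⟨a ^ 2, this⟩

lemma contract_theta : contract 3 (theta R) = expand 3 three_ne_zero (theta R) := by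
  ext n
  rw [coeff_contract, coeff_expand]
  split_ifs with h
  · obtain ⟨m, rfl⟩ := h
    simp [theta, ← mul_assoc, thetaCoeff_nine_mul]
  · simp [theta, thetaCoeff_three_mul_of_not_dvd h]

lemma contract_theta_sq : contract 3 (theta R ^ 2) = expand 3 three_ne_zero (theta R ^ 2) := by
  have hsupp {i : ℕ} (hi : coeff i (theta R) ≠ 0) : i % 3 ≠ 2 := fun h ↦
    hi (by simp [theta, thetaCoeff_eq_zero_of_mod_three h])
  rw [sq, contract_mul three_ne_zero fun i j hij hi hj ↦ ?_, contract_theta, map_mul]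
  have := hsupp hi
  have := hsupp hj
  omega

lemma map_theta : map (Int.castRingHom R) (theta ℤ) = theta R := by
  ext
  simp [theta]

end Theta

section GeneratingFunction

noncomputable def colorPartProd (r s M : ℕ) : ℤ⟦X⟧ :=
  ∏ m ∈ range M, invOfUnit (1 - X ^ (2 * m + 1)) 1 ^ s * invOfUnit (1 - X ^ (2 * m + 2)) 1 ^ r

lemma colorPartProd_smodEq (r s : ℕ) {M M' : ℕ} (h : M ≤ M') :
    colorPartProd r s M' ≡ colorPartProd r s M [SMOD Ideal.span {X ^ (2 * M + 1)}] := by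
  obtain ⟨u, rfl⟩ := Nat.exists_eq_add_of_le h
  rw [colorPartProd, prod_range_add, ← colorPartProd]
  have hfactor (j : ℕ) := (((invOfUnit_one_sub_X_pow_smodEq_one (R := ℤ)
    (show 2 * (M + j) + 1 ≠ 0 by omega)).of_pow_le (by omega)).pow s).mul
    (((invOfUnit_one_sub_X_pow_smodEq_one (R := ℤ)
    (show 2 * (M + j) + 2 ≠ 0 by omega)).of_pow_le (show 2 * M + 1 ≤ _ by omega)).pow r)
  simpa using (SModEq.refl (colorPartProd r s M)).mul (SModEq.prod fun j (_ : j ∈ range u) ↦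
    hfactor j)

lemma mk_colorPart_smodEq (r s M : ℕ) :
    mk (colorPart r s) ≡ colorPartProd r s M [SMOD Ideal.span {X ^ M}] := by
  refine smodEq_X_pow_iff.mpr fun i hi ↦ ?_
  rw [coeff_mk]
  exact smodEq_X_pow_iff.mp (colorPartProd_smodEq r s (show i + 1 ≤ M by omega)).symm i
    (by omega)

lemma colorPartProd_mul (r s M : ℕ) :
    colorPartProd r s M * oddProd ℤ M ^ s * qPochhammer (X ^ 2) M ^ r = 1 := by
  rw [colorPartProd, oddProd, qPochhammer, ← prod_pow, ← prod_pow, ← prod_mul_distrib,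
    ← prod_mul_distrib]
  refine prod_eq_one fun m _ ↦ ?_
  have hodd : (1 - X ^ (2 * m + 1) : ℤ⟦X⟧) * invOfUnit (1 - X ^ (2 * m + 1)) 1 = 1 :=
    mul_invOfUnit _ _ (by simp)
  have heven : (1 - X ^ (2 * m + 2) : ℤ⟦X⟧) * invOfUnit (1 - X ^ (2 * m + 2)) 1 = 1 :=
    mul_invOfUnit _ _ (by simp)
  rw [← pow_mul, show 2 * (m + 1) = 2 * m + 2 by ring]
  calc _ = ((1 - X ^ (2 * m + 1) : ℤ⟦X⟧) * invOfUnit (1 - X ^ (2 * m + 1)) 1) ^ s *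
        ((1 - X ^ (2 * m + 2) : ℤ⟦X⟧) * invOfUnit (1 - X ^ (2 * m + 2)) 1) ^ r := by
          rw [mul_pow, mul_pow]; ring
    _ = 1 := by rw [hodd, heven, one_pow, one_pow, one_mul]

lemma mk_colorPart_mul_theta_sq : mk (colorPart 2 4) * theta ℤ ^ 2 = 1 :=
  eq_of_forall_smodEq_X_pow fun M ↦ by
    have h := (mk_colorPart_smodEq 2 4 M).mul
      (((theta_smodEq ℤ M).symm.of_pow_le M.le_succ).pow 2)
    rwa [show colorPartProd 2 4 M * (oddProd ℤ M ^ 2 * qPochhammer (X ^ 2) M) ^ 2 = 1 by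
      linear_combination colorPartProd_mul 2 4 M] at h

end GeneratingFunction

lemma contract_map_mk_colorPart :
    contract 3 (map (Int.castRingHom (ZMod 3)) (mk (colorPart 2 4))) = theta (ZMod 3) ^ 2 := by
  set F := map (Int.castRingHom (ZMod 3)) (mk (colorPart 2 4))
  set θ := theta (ZMod 3)
  have hF : F * θ ^ 2 = 1 := by
    simpa [map_theta] using congrArg (map (Int.castRingHom (ZMod 3))) mk_colorPart_mul_theta_sq
  have hθ : θ ^ 3 = expand 3 three_ne_zero θ := pow_eq_expand_zmod θ
  have h : contract 3 F * θ = θ ^ 3 := by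
    rw [← contract_mul_expand three_ne_zero, ← hθ, show F * θ ^ 3 = F * θ ^ 2 * θ by ring, hF,
      one_mul, contract_theta, hθ]
  linear_combination (F * θ) * h + (θ ^ 2 - contract 3 F) * hF

lemma coeff_pow_mul_eq_zero_of_contract_eq_expand {R : Type*} [CommRing R] {p : ℕ} (hp : p ≠ 0)
    {T : R⟦X⟧} (hT : contract p T = expand p hp T) {m : ℕ} (hm : ¬ p ∣ m) (α : ℕ) :
    coeff (p ^ (2 * α + 1) * m) T = 0 := by
  induction α with
  | zero =>
    rw [mul_zero, zero_add, pow_one, ← coeff_contract, hT, coeff_expand_of_not_dvd p hp _ hm]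
  | succ α ih =>
    rw [show p ^ (2 * (α + 1) + 1) * m = p * (p * (p ^ (2 * α + 1) * m)) by ring,
      ← coeff_contract, hT, coeff_expand_mul, ih]

lemma colorPart_two_four_modEq_zero (α : ℕ) {m : ℕ} (hm : ¬ 3 ∣ m) :
    colorPart 2 4 (3 ^ (2 * α + 2) * m) ≡ 0 [ZMOD 3] := by
  set F := map (Int.castRingHom (ZMod 3)) (mk (colorPart 2 4))
  have hT : contract 3 (contract 3 F) = expand 3 three_ne_zero (contract 3 F) := by
    rw [contract_map_mk_colorPart, contract_theta_sq]
  have h := coeff_pow_mul_eq_zero_of_contract_eq_expand three_ne_zero hT hm α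
  rw [coeff_contract, ← mul_assoc, ← pow_succ', coeff_map, coeff_mk, eq_intCast] at h
  exact Int.modEq_zero_iff_dvd.mpr ((ZMod.intCast_zmod_eq_zero_iff_dvd _ 3).mp h)

theorem stmt18 (α n : ℕ) :
    colorPart 2 4 (3 ^ (2 * α + 3) * n + 3 ^ (2 * (α + 1))) ≡ 0 [ZMOD 3] ∧
    colorPart 2 4 (3 ^ (2 * α + 3) * n + 2 * 3 ^ (2 * (α + 1))) ≡ 0 [ZMOD 3] := by
  constructor
  · rw [show 3 ^ (2 * α + 3) * n + 3 ^ (2 * (α + 1)) = 3 ^ (2 * α + 2) * (3 * n + 1) by ring]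
    exact colorPart_two_four_modEq_zero α (by omega)
  · rw [show 3 ^ (2 * α + 3) * n + 2 * 3 ^ (2 * (α + 1)) = 3 ^ (2 * α + 2) * (3 * n + 2) by ring]
    exact colorPart_two_four_modEq_zero α (by omega)
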